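/- arXiv:2305.15949 — 5 statements merged into one kernel-verified Lean document; each statement's English description precedes it below -/
import Mathlib

section
/- Let α > 0, r > 0, c₁ > 0, c_disc > 0, M ∈ ℕ. Let g : (0,∞) → ℝ be measurable with |g(ℓ)| ≤ c₁·e^{−αℓ} for all ℓ > 0. Let L^(1),…,L^(M) be nonnegative reals satisfying sup_{ℓ > 0} |(1/M)∑_{k=1}^M 1_{ℓ ≤ L^(k)} − e^{−rℓ}| ≤ c_disc/M, and let Λ > 0 be any positive real (in the application Λ = min(L_max, max_k L^(k))). Then |∫_0^Λ e^{rℓ} · g(ℓ) · (1/M)∑_{k=1}^M 1_{[0,L^(k)]}(ℓ) dℓ − ∫_0^∞ g(ℓ) dℓ| ≤ (c₁/α)·e^{−αΛ} + (c_disc·c₁/M)·B(Λ), where B(Λ) := (e^{(r−α)Λ} − 1)/(r−α) if r ≠ α, and B(Λ) := Λ if r = α. -/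
/-! Since `e^{rℓ} g S - g = e^{rℓ} g (S - e^{-rℓ})`, replacing the weight `S` by its limit tail
`e^{-rℓ}` turns the truncated estimator into `∫_0^Λ g`, at a cost of at most
`δ c ∫_0^Λ e^{(r-α)ℓ}` when `|S - e^{-rℓ}| ≤ δ`; the remaining tail `∫_Λ^∞ g` is at most
`(c/α) e^{-αΛ}`. -/

open Set MeasureTheory Real

section ExponentialTail

variable {E : Type*} [NormedAddCommGroup E] {g : ℝ → E} {a c α : ℝ}

theorem integrableOn_Ioi_of_norm_le_exp (hα : 0 < α)
    (hg_meas : AEStronglyMeasurable g (volume.restrict (Ioi a)))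
    (hg : ∀ x > a, ‖g x‖ ≤ c * exp (-α * x)) : IntegrableOn g (Ioi a) :=
  ((exp_neg_integrableOn_Ioi a hα).const_mul c).mono' hg_meas <|
    (ae_restrict_mem measurableSet_Ioi).mono hg

theorem norm_setIntegral_Ioi_le_of_norm_le_exp [NormedSpace ℝ E] (hα : 0 < α)
    (hg : ∀ x > a, ‖g x‖ ≤ c * exp (-α * x)) :
    ‖∫ x in Ioi a, g x‖ ≤ c / α * exp (-α * a) := by
  have hexp : ∫ x in Ioi a, exp (-α * x) = exp (-α * a) / α := by
    rw [integral_exp_mul_Ioi (neg_lt_zero.mpr hα), div_neg, neg_div, neg_neg]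
  calc ‖∫ x in Ioi a, g x‖ ≤ ∫ x in Ioi a, c * exp (-α * x) :=
        norm_integral_le_of_norm_le ((exp_neg_integrableOn_Ioi a hα).const_mul c)
          ((ae_restrict_mem measurableSet_Ioi).mono hg)
    _ = c / α * exp (-α * a) := by rw [integral_const_mul, hexp]; ring

end ExponentialTail

theorem intervalIntegral_exp_mul (c b : ℝ) :
    ∫ x in (0 : ℝ)..b, exp (c * x) = if c = 0 then b else (exp (c * b) - 1) / c := by
  split_ifs with hc
  · simp [hc]
  · rw [intervalIntegral.integral_comp_mul_left _ hc, integral_exp, mul_zero, exp_zero,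
      smul_eq_mul, inv_mul_eq_div]

theorem abs_exp_mul_mul_sub_le {r α c δ ℓ y w : ℝ} (hy : |y| ≤ c * exp (-α * ℓ))
    (hw : |w - exp (-r * ℓ)| ≤ δ) : |exp (r * ℓ) * y * w - y| ≤ δ * c * exp ((r - α) * ℓ) := by
  have hexp : exp (r * ℓ) * exp (-r * ℓ) = 1 := by rw [← exp_add]; simp
  have hreweight : exp (r * ℓ) * y * w - y = exp (r * ℓ) * y * (w - exp (-r * ℓ)) := by
    linear_combination y * hexp
  rw [hreweight, abs_mul, abs_mul, abs_of_pos (exp_pos _),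
    show (r - α) * ℓ = r * ℓ + -α * ℓ by ring, exp_add]
  calc exp (r * ℓ) * |y| * |w - exp (-r * ℓ)|
      ≤ exp (r * ℓ) * (c * exp (-α * ℓ)) * δ :=
        mul_le_mul (mul_le_mul_of_nonneg_left hy (exp_pos _).le) hw (abs_nonneg _)
          (mul_nonneg (exp_pos _).le ((abs_nonneg _).trans hy))
    _ = δ * c * (exp (r * ℓ) * exp (-α * ℓ)) := by ring

theorem abs_intervalIntegral_exp_mul_sub_integral_Ioi_le {g S : ℝ → ℝ} {α r c δ Λ : ℝ}
    (hα : 0 < α) (hΛ : 0 ≤ Λ) (hg_meas : AEStronglyMeasurable g (volume.restrict (Ioi 0)))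
    (hS : Measurable S) (hg : ∀ ℓ > 0, |g ℓ| ≤ c * exp (-α * ℓ))
    (hS_disc : ∀ ℓ > 0, |S ℓ - exp (-r * ℓ)| ≤ δ) :
    |(∫ ℓ in (0 : ℝ)..Λ, exp (r * ℓ) * g ℓ * S ℓ) - ∫ ℓ in Ioi 0, g ℓ|
      ≤ c / α * exp (-α * Λ) + δ * c * ∫ ℓ in (0 : ℝ)..Λ, exp ((r - α) * ℓ) := by
  have herr_le : ∀ ℓ > 0, ‖exp (r * ℓ) * g ℓ * S ℓ - g ℓ‖ ≤ δ * c * exp ((r - α) * ℓ) :=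
    fun ℓ hℓ => abs_exp_mul_mul_sub_le (hg ℓ hℓ) (hS_disc ℓ hℓ)
  have hbound_int : IntervalIntegrable (fun ℓ => δ * c * exp ((r - α) * ℓ)) volume 0 Λ := by
    apply Continuous.intervalIntegrable
    fun_prop
  have hg_int : IntegrableOn g (Ioi 0) := integrableOn_Ioi_of_norm_le_exp hα hg_meas hg
  have hg_int_Ioc : IntervalIntegrable g volume 0 Λ :=
    (intervalIntegrable_iff_integrableOn_Ioc_of_le hΛ).2 (hg_int.mono_set Ioc_subset_Ioi_self)
  have herr_int : IntervalIntegrable (fun ℓ => exp (r * ℓ) * g ℓ * S ℓ - g ℓ) volume 0 Λ := by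
    have hg_meas_Ioc := hg_meas.mono_measure
      (Measure.restrict_mono (uIoc_of_le hΛ ▸ Ioc_subset_Ioi_self) le_rfl)
    have hexp_meas : Measurable fun ℓ => exp (r * ℓ) := by fun_prop
    refine hbound_int.mono_fun' ?_ ?_
    · exact ((hexp_meas.aestronglyMeasurable.mul hg_meas_Ioc).mul hS.aestronglyMeasurable).sub hg_meas_Ioc
    · filter_upwards [ae_restrict_mem measurableSet_uIoc] with ℓ hℓ
      rw [uIoc_of_le hΛ] at hℓ
      exact herr_le ℓ hℓ.1
  have hest_int : IntervalIntegrable (fun ℓ => exp (r * ℓ) * g ℓ * S ℓ) volume 0 Λ := by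
    simpa using herr_int.add hg_int_Ioc
  have htail : ‖∫ ℓ in Ioi Λ, g ℓ‖ ≤ c / α * exp (-α * Λ) :=
    norm_setIntegral_Ioi_le_of_norm_le_exp hα fun ℓ hℓ => hg ℓ (hΛ.trans_lt hℓ)
  have hbody : ‖∫ ℓ in (0 : ℝ)..Λ, exp (r * ℓ) * g ℓ * S ℓ - g ℓ‖
      ≤ ∫ ℓ in (0 : ℝ)..Λ, δ * c * exp ((r - α) * ℓ) :=
    intervalIntegral.norm_integral_le_of_norm_le hΛ
      (ae_of_all _ fun ℓ hℓ => herr_le ℓ hℓ.1) hbound_int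
  rw [← intervalIntegral.integral_interval_add_Ioi hg_int (hg_int.mono_set (Ioi_subset_Ioi hΛ)),
    ← sub_sub, ← intervalIntegral.integral_sub hest_int hg_int_Ioc,
    ← intervalIntegral.integral_const_mul]
  calc _ ≤ ‖∫ ℓ in (0 : ℝ)..Λ, exp (r * ℓ) * g ℓ * S ℓ - g ℓ‖ + ‖∫ ℓ in Ioi Λ, g ℓ‖ :=
        abs_sub _ _
    _ ≤ _ := by linarith

theorem stmt_7_general (α r c₁ c_disc : ℝ) (M : ℕ)
    (hα : 0 < α)
    (g : ℝ → ℝ) (hg_meas : AEMeasurable g (volume.restrict (Ioi 0)))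
    (hg : ∀ ℓ > (0 : ℝ), |g ℓ| ≤ c₁ * Real.exp (-α * ℓ))
    (L : Fin M → ℝ)
    (hdisc : ∀ ℓ > (0 : ℝ),
      |(1 / (M : ℝ)) * ∑ k, (if ℓ ≤ L k then (1 : ℝ) else 0) - Real.exp (-r * ℓ)|
        ≤ c_disc / M)
    (Λ : ℝ) (hΛ : 0 < Λ) :
    |(∫ ℓ in (0 : ℝ)..Λ,
        Real.exp (r * ℓ) * g ℓ *
          ((1 / (M : ℝ)) * ∑ k, (if ℓ ≤ L k then (1 : ℝ) else 0)))
      - ∫ ℓ in Ioi (0 : ℝ), g ℓ|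
      ≤ c₁ / α * Real.exp (-α * Λ)
        + c_disc * c₁ / M *
            (if r = α then Λ else (Real.exp ((r - α) * Λ) - 1) / (r - α)) := by
  have hS : Measurable fun ℓ : ℝ => (1 / (M : ℝ)) * ∑ k, (if ℓ ≤ L k then (1 : ℝ) else 0) :=
    measurable_const.mul <| Finset.measurable_sum _ fun k _ =>
      Measurable.ite (measurableSet_le measurable_id measurable_const) measurable_const
        measurable_const
  have hbias := abs_intervalIntegral_exp_mul_sub_integral_Ioi_le hα hΛ.le
    hg_meas.aestronglyMeasurable hS hg hdisc
  simp only [intervalIntegral_exp_mul, sub_eq_zero] at hbias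
  exact hbias.trans_eq (by ring)

/-- bias estimate in the proof of Theorem 4.2. If `|g(ℓ)| ≤ c₁·e^(−αℓ)`
and the nonnegative levels `L⁽¹⁾, …, L⁽ᴹ⁾` satisfy the exponential tail discrepancy bound
`c_disc/M`, then for any `Λ > 0`,
`|∫_0^Λ e^(rℓ)·g(ℓ)·(1/M)∑ₖ 1_{[0,L⁽ᵏ⁾]}(ℓ) dℓ − ∫_0^∞ g(ℓ) dℓ|
  ≤ (c₁/α)·e^(−αΛ) + (c_disc·c₁/M)·B(Λ)`,
where `B(Λ) = (e^((r−α)Λ) − 1)/(r−α)` if `r ≠ α` and `B(Λ) = Λ` if `r = α`. -/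
theorem stmt_7 (α r c₁ c_disc : ℝ) (M : ℕ)
    (hα : 0 < α) (hr : 0 < r) (hc₁ : 0 < c₁) (hcd : 0 < c_disc)
    (g : ℝ → ℝ) (hg_meas : AEMeasurable g (volume.restrict (Ioi 0)))
    (hg : ∀ ℓ > (0 : ℝ), |g ℓ| ≤ c₁ * Real.exp (-α * ℓ))
    (L : Fin M → ℝ) (hL0 : ∀ k, 0 ≤ L k)
    (hdisc : ∀ ℓ > (0 : ℝ),
      |(1 / (M : ℝ)) * ∑ k, (if ℓ ≤ L k then (1 : ℝ) else 0) - Real.exp (-r * ℓ)|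
        ≤ c_disc / M)
    (Λ : ℝ) (hΛ : 0 < Λ) :
    |(∫ ℓ in (0 : ℝ)..Λ,
        Real.exp (r * ℓ) * g ℓ *
          ((1 / (M : ℝ)) * ∑ k, (if ℓ ≤ L k then (1 : ℝ) else 0)))
      - ∫ ℓ in Ioi (0 : ℝ), g ℓ|
      ≤ c₁ / α * Real.exp (-α * Λ)
        + c_disc * c₁ / M *
            (if r = α then Λ else (Real.exp ((r - α) * Λ) - 1) / (r - α)) :=
  stmt_7_general α r c₁ c_disc M hα g hg_meas hg L hdisc Λ hΛ
end

section
/- Let (Ω, 𝒜, ℙ) be a probability space, L_max > 0, r > 0, β > 0, c₂ > 0 and M ∈ ℕ. Let D^(1),…,D^(M) : Ω × [0, L_max] → ℝ be jointly measurable, square-integrable stochastic processes that are independent across k and identically distributed (all with the same finite-dimensional law as a process D), and suppose Var[D(ℓ)] ≤ c₂·e^{−βℓ} for all ℓ ∈ [0, L_max]. Let L^(1),…,L^(M) be (deterministic) nonnegative reals and define X^(k) := ∫_0^{L_max} e^{rℓ}·D^(k)(ℓ)·1_{[0,L^(k)]}(ℓ) dℓ. Then Var[(1/M)∑_{k=1}^M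 X^(k)] ≤ (c₂/M)·∫_0^{L_max}∫_0^{L_max} (1/M)∑_{k=1}^M 1_{[0,L^(k)]}(max(ℓ,ℓ'))·e^{(r−β/2)ℓ}·e^{(r−β/2)ℓ'} dℓ dℓ'. -/
/-!
Write `X⁽ᵏ⁾ = ∫ w_k(ℓ) D⁽ᵏ⁾(ℓ) dℓ` with the weight `w_k(ℓ) = e^{rℓ}·1_{[0,L⁽ᵏ⁾]}(ℓ)`. By Fubini the
covariance of two such integrals is the double integral of the pointwise covariances
`Cov[w_j(ℓ) D⁽ʲ⁾(ℓ), w_k(ℓ') D⁽ᵏ⁾(ℓ')]`. For `j ≠ k` these vanish by independence, so only the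
variances of the `X⁽ᵏ⁾` remain. For `j = k`, Cauchy–Schwarz and the variance decay bound the
integrand by `c₂·w_k(ℓ) e^{-βℓ/2}·w_k(ℓ') e^{-βℓ'/2}`, and
`1_{[0,L]}(ℓ)·1_{[0,L]}(ℓ') = 1_{[0,L]}(max(ℓ,ℓ'))`.
-/

open Set MeasureTheory ProbabilityTheory
open scoped ENNReal

section CovarianceOfIntegrals

variable {Ω α β : Type*} [MeasurableSpace Ω] [MeasurableSpace α] [MeasurableSpace β]
  {P : Measure Ω} {ν₁ : Measure α} {ν₂ : Measure β}

lemma covariance_sq_le_variance_mul [IsFiniteMeasure P] {X Y : Ω → ℝ} (hX : MemLp X 2 P)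
    (hY : MemLp Y 2 P) : cov[X, Y; P] ^ 2 ≤ Var[X; P] * Var[Y; P] := by
  have hdiscrim : discrim Var[X; P] (2 * cov[X, Y; P]) Var[Y; P] ≤ 0 := by
    refine discrim_le_zero fun t => ?_
    have h := variance_nonneg (t • X + Y) P
    rw [variance_add (hX.const_smul t) hY, variance_smul, covariance_smul_left] at h
    linarith
  rw [discrim] at hdiscrim
  linarith

lemma covariance_le_mul_of_variance_le [IsFiniteMeasure P] {X Y : Ω → ℝ} {a b : ℝ}
    (hX : MemLp X 2 P) (hY : MemLp Y 2 P) (ha : 0 ≤ a) (hb : 0 ≤ b)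
    (hXa : Var[X; P] ≤ a ^ 2) (hYb : Var[Y; P] ≤ b ^ 2) : cov[X, Y; P] ≤ a * b := by
  refine (le_abs_self _).trans (abs_le_of_sq_le_sq ?_ (mul_nonneg ha hb))
  calc cov[X, Y; P] ^ 2 ≤ Var[X; P] * Var[Y; P] := covariance_sq_le_variance_mul hX hY
    _ ≤ a ^ 2 * b ^ 2 :=
      mul_le_mul hXa hYb (variance_nonneg _ _) (sq_nonneg _)
    _ = (a * b) ^ 2 := (mul_pow a b 2).symm

lemma variance_fun_sum_of_covariance_eq_zero {ι : Type*} [Fintype ι] [IsFiniteMeasure P]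
    {X : ι → Ω → ℝ} (hX : ∀ i, MemLp (X i) 2 P) (hcov : ∀ i j, i ≠ j → cov[X i, X j; P] = 0) :
    Var[fun ω => ∑ i, X i ω; P] = ∑ i, Var[X i; P] := by
  rw [variance_fun_sum hX]
  refine Finset.sum_congr rfl fun i _ => ?_
  rw [Finset.sum_eq_single i (fun j _ hji => hcov i j hji.symm) (by simp),
    covariance_self (hX i).aemeasurable]

lemma MeasureTheory.MemLp.comp_fst_fst {p : ℝ≥0∞} [SFinite P] [SFinite ν₁] [IsFiniteMeasure ν₂]
    {F : Ω × α → ℝ} (hF : MemLp F p (P.prod ν₁)) :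
    MemLp (fun z : Ω × α × β => F (z.1, z.2.1)) p (P.prod (ν₁.prod ν₂)) := by
  have hmp : MeasurePreserving (Prod.map id Prod.fst) (P.prod (ν₁.prod ν₂))
      (P.prod (ν₂ univ • ν₁)) :=
    (MeasurePreserving.id P).prod ⟨measurable_fst, Measure.map_fst_prod⟩
  rw [Measure.prod_smul_right] at hmp
  exact (hF.smul_measure (measure_ne_top ν₂ univ)).comp_measurePreserving hmp

lemma MeasureTheory.MemLp.comp_fst_snd {p : ℝ≥0∞} [SFinite P] [IsFiniteMeasure ν₁] [SFinite ν₂]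
    {G : Ω × β → ℝ} (hG : MemLp G p (P.prod ν₂)) :
    MemLp (fun z : Ω × α × β => G (z.1, z.2.2)) p (P.prod (ν₁.prod ν₂)) := by
  have hmp : MeasurePreserving (Prod.map id Prod.snd) (P.prod (ν₁.prod ν₂))
      (P.prod (ν₁ univ • ν₂)) :=
    (MeasurePreserving.id P).prod ⟨measurable_snd, Measure.map_snd_prod⟩
  rw [Measure.prod_smul_right] at hmp
  exact (hG.smul_measure (measure_ne_top ν₁ univ)).comp_measurePreserving hmp

lemma integrable_mul_prod_prod [SFinite P] [IsFiniteMeasure ν₁] [IsFiniteMeasure ν₂]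
    {F : Ω × α → ℝ} {G : Ω × β → ℝ} (hF : MemLp F 2 (P.prod ν₁)) (hG : MemLp G 2 (P.prod ν₂)) :
    Integrable (fun z : Ω × α × β => F (z.1, z.2.1) * G (z.1, z.2.2)) (P.prod (ν₁.prod ν₂)) :=
  hF.comp_fst_fst.integrable_mul hG.comp_fst_snd

lemma MeasureTheory.MemLp.integral_prod_left [SFinite P] [IsFiniteMeasure ν₁] {F : Ω × α → ℝ}
    (hF : MemLp F 2 (P.prod ν₁)) : MemLp (fun ω => ∫ a, F (ω, a) ∂ν₁) 2 P := by
  refine (memLp_two_iff_integrable_sq hF.1.integral_prod_right').2 ?_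
  refine (integrable_mul_prod_prod (ν₂ := ν₁) hF hF).integral_prod_left.congr
    (ae_of_all _ fun ω => ?_)
  simp only [sq]
  exact integral_prod_mul (fun a => F (ω, a)) (fun a => F (ω, a))

lemma MeasureTheory.MemLp.prod_left_ae_two [SFinite P] [SFinite ν₁] {F : Ω × α → ℝ}
    (hF : MemLp F 2 (P.prod ν₁)) : ∀ᵐ a ∂ν₁, MemLp (fun ω => F (ω, a)) 2 P := by
  filter_upwards [hF.1.prodMk_right, hF.integrable_sq.prod_left_ae] with a hm hsq
  exact (memLp_two_iff_integrable_sq hm).2 hsq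

variable [IsProbabilityMeasure P] [IsFiniteMeasure ν₁] [IsFiniteMeasure ν₂]
  {F : Ω × α → ℝ} {G : Ω × β → ℝ}

lemma covariance_slices_ae_eq (hF : MemLp F 2 (P.prod ν₁)) (hG : MemLp G 2 (P.prod ν₂)) :
    (fun q : α × β => cov[fun ω => F (ω, q.1), fun ω => G (ω, q.2); P]) =ᵐ[ν₁.prod ν₂]
      fun q => (∫ ω, F (ω, q.1) * G (ω, q.2) ∂P) - (∫ ω, F (ω, q.1) ∂P) * ∫ ω, G (ω, q.2) ∂P := by
  filter_upwards [Measure.quasiMeasurePreserving_fst.ae hF.prod_left_ae_two,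
    Measure.quasiMeasurePreserving_snd.ae hG.prod_left_ae_two] with q hFq hGq
  exact covariance_eq_sub hFq hGq

lemma integrable_mean_mul_mean (hF : MemLp F 2 (P.prod ν₁)) (hG : MemLp G 2 (P.prod ν₂)) :
    Integrable (fun q : α × β => (∫ ω, F (ω, q.1) ∂P) * ∫ ω, G (ω, q.2) ∂P) (ν₁.prod ν₂) :=
  (hF.integrable one_le_two).integral_prod_right.mul_prod
    (hG.integrable one_le_two).integral_prod_right

lemma integrable_covariance_slices (hF : MemLp F 2 (P.prod ν₁)) (hG : MemLp G 2 (P.prod ν₂)) :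
    Integrable (fun q : α × β => cov[fun ω => F (ω, q.1), fun ω => G (ω, q.2); P])
      (ν₁.prod ν₂) :=
  ((integrable_mul_prod_prod hF hG).integral_prod_right.sub
    (integrable_mean_mul_mean hF hG)).congr (covariance_slices_ae_eq hF hG).symm

theorem covariance_integral_integral (hF : MemLp F 2 (P.prod ν₁)) (hG : MemLp G 2 (P.prod ν₂)) :
    cov[fun ω => ∫ a, F (ω, a) ∂ν₁, fun ω => ∫ b, G (ω, b) ∂ν₂; P]
      = ∫ q, cov[fun ω => F (ω, q.1), fun ω => G (ω, q.2); P] ∂(ν₁.prod ν₂) := by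
  have hK := integrable_mul_prod_prod hF hG
  have hsecond : ∫ ω, (∫ a, F (ω, a) ∂ν₁) * (∫ b, G (ω, b) ∂ν₂) ∂P
      = ∫ q, ∫ ω, F (ω, q.1) * G (ω, q.2) ∂P ∂(ν₁.prod ν₂) := by
    simp_rw [← integral_prod_mul]
    exact integral_integral_swap hK
  have hmeans : (∫ ω, ∫ a, F (ω, a) ∂ν₁ ∂P) * (∫ ω, ∫ b, G (ω, b) ∂ν₂ ∂P)
      = ∫ q, (∫ ω, F (ω, q.1) ∂P) * (∫ ω, G (ω, q.2) ∂P) ∂(ν₁.prod ν₂) := by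
    rw [integral_integral_swap (f := fun ω a => F (ω, a)) (hF.integrable one_le_two),
      integral_integral_swap (f := fun ω b => G (ω, b)) (hG.integrable one_le_two),
      ← integral_prod_mul]
  rw [covariance_eq_sub hF.integral_prod_left hG.integral_prod_left,
    integral_congr_ae (covariance_slices_ae_eq hF hG),
    integral_sub hK.integral_prod_right (integrable_mean_mul_mean hF hG), ← hsecond, ← hmeans]
  rfl

theorem covariance_integral_integral_eq_zero_of_indepFun
    (hF : MemLp F 2 (P.prod ν₁)) (hG : MemLp G 2 (P.prod ν₂))
    (hFG : IndepFun (fun ω a => F (ω, a)) (fun ω b => G (ω, b)) P) :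
    cov[fun ω => ∫ a, F (ω, a) ∂ν₁, fun ω => ∫ b, G (ω, b) ∂ν₂; P] = 0 := by
  rw [covariance_integral_integral hF hG]
  refine integral_eq_zero_of_ae ?_
  filter_upwards [Measure.quasiMeasurePreserving_fst.ae hF.prod_left_ae_two,
    Measure.quasiMeasurePreserving_snd.ae hG.prod_left_ae_two] with q hFq hGq
  exact (hFG.comp (measurable_pi_apply q.1) (measurable_pi_apply q.2)).covariance_eq_zero hFq hGq

end CovarianceOfIntegrals

noncomputable def levelWeight (r L ℓ : ℝ) : ℝ := Real.exp (r * ℓ) * if ℓ ≤ L then 1 else 0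

noncomputable def levelKernel (a L : ℝ) (q : ℝ × ℝ) : ℝ :=
  (if max q.1 q.2 ≤ L then 1 else 0) * Real.exp (a * q.1) * Real.exp (a * q.2)

section LevelWeight

variable {r L : ℝ}

lemma measurable_levelWeight : Measurable (levelWeight r L) :=
  (measurable_id.const_mul r).exp.mul
    (Measurable.ite measurableSet_Iic measurable_const measurable_const)

lemma abs_levelWeight_le (hr : 0 ≤ r) (ℓ : ℝ) : |levelWeight r L ℓ| ≤ Real.exp (r * L) := by
  unfold levelWeight
  split_ifs with hℓ
  · rw [mul_one, abs_of_pos (Real.exp_pos _)]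
    exact Real.exp_le_exp.2 (mul_le_mul_of_nonneg_left hℓ hr)
  · simp [Real.exp_nonneg]

lemma levelWeight_sq_mul_exp (β ℓ : ℝ) :
    levelWeight r L ℓ ^ 2 * Real.exp (-β * ℓ)
      = ((if ℓ ≤ L then 1 else 0) * Real.exp ((r - β / 2) * ℓ)) ^ 2 := by
  unfold levelWeight
  split_ifs
  · simp only [mul_one, one_mul, ← Real.exp_nat_mul, ← Real.exp_add]
    ring_nf
  · simp

lemma memLp_levelWeight_mul {Ω : Type*} [MeasurableSpace Ω] {P : Measure Ω} {μ : Measure ℝ}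
    {D : Ω → ℝ → ℝ} (hr : 0 ≤ r)
    (hD : MemLp (fun p : Ω × ℝ => D p.1 p.2) 2 (P.prod μ)) :
    MemLp (fun p : Ω × ℝ => levelWeight r L p.2 * D p.1 p.2) 2 (P.prod μ) :=
  hD.mul' (memLp_top_of_bound (measurable_levelWeight.comp measurable_snd).aestronglyMeasurable
    (Real.exp (r * L)) (ae_of_all _ fun p => abs_levelWeight_le hr p.2))

end LevelWeight

section WeightedProcess

variable {Ω : Type*} [MeasurableSpace Ω] {P : Measure Ω} [IsProbabilityMeasure P]
  {Lmax r β c₂ L : ℝ}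

lemma covariance_levelWeight_mul_le {D D₀ : Ω → ℝ → ℝ} (hDm : Measurable fun ω => D ω)
    (hD₀m : Measurable fun ω => D₀ ω) (hident : P.map (fun ω => D ω) = P.map (fun ω => D₀ ω))
    (hvar : ∀ ℓ ∈ Icc (0 : ℝ) Lmax, Var[fun ω => D₀ ω ℓ; P] ≤ c₂ * Real.exp (-β * ℓ))
    (hc₂ : 0 ≤ c₂) {ℓ ℓ' : ℝ} (hℓ : ℓ ∈ Icc 0 Lmax) (hℓ' : ℓ' ∈ Icc 0 Lmax)
    (hDℓ : MemLp (fun ω => levelWeight r L ℓ * D ω ℓ) 2 P)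
    (hDℓ' : MemLp (fun ω => levelWeight r L ℓ' * D ω ℓ') 2 P) :
    cov[fun ω => levelWeight r L ℓ * D ω ℓ, fun ω => levelWeight r L ℓ' * D ω ℓ'; P]
      ≤ c₂ * levelKernel (r - β / 2) L (ℓ, ℓ') := by
  have hslice : ∀ t ∈ Icc (0 : ℝ) Lmax, Var[fun ω => levelWeight r L t * D ω t; P]
      ≤ (√c₂ * ((if t ≤ L then 1 else 0) * Real.exp ((r - β / 2) * t))) ^ 2 := by
    intro t ht
    have hlaw : IdentDistrib (fun ω => D ω t) (fun ω => D₀ ω t) P P :=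
      (IdentDistrib.mk hDm.aemeasurable hD₀m.aemeasurable hident).comp (measurable_pi_apply t)
    rw [variance_const_mul, hlaw.variance_eq, mul_pow, Real.sq_sqrt hc₂,
      ← levelWeight_sq_mul_exp, mul_left_comm]
    exact mul_le_mul_of_nonneg_left (hvar t ht) (sq_nonneg _)
  have hnonneg : ∀ t, 0 ≤ √c₂ * ((if t ≤ L then 1 else 0) * Real.exp ((r - β / 2) * t)) :=
    fun t => by split_ifs <;> positivity
  refine (covariance_le_mul_of_variance_le hDℓ hDℓ' (hnonneg ℓ) (hnonneg ℓ') (hslice ℓ hℓ)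
    (hslice ℓ' hℓ')).trans_eq ?_
  rw [mul_mul_mul_comm, Real.mul_self_sqrt hc₂, levelKernel]
  by_cases h : ℓ ≤ L <;> by_cases h' : ℓ' ≤ L <;> simp [h, h']

lemma integrable_levelKernel (a L Lmax : ℝ) :
    Integrable (levelKernel a L)
      ((volume.restrict (Icc 0 Lmax)).prod (volume.restrict (Icc 0 Lmax))) := by
  have hexp : Integrable (fun t => Real.exp (a * t)) (volume.restrict (Icc 0 Lmax)) :=
    (by fun_prop : Continuous fun t => Real.exp (a * t)).integrableOn_Icc
  unfold levelKernel
  simp_rw [mul_assoc]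
  refine (hexp.mul_prod hexp).bdd_mul (c := 1) ?_ (ae_of_all _ fun q => ?_)
  · exact (Measurable.ite (measurableSet_le (by fun_prop) measurable_const) measurable_const
      measurable_const).aestronglyMeasurable
  · split_ifs <;> simp

lemma variance_integral_levelWeight_mul_le {D D₀ : Ω → ℝ → ℝ} (hr : 0 ≤ r)
    (hDm : Measurable fun ω => D ω) (hD₀m : Measurable fun ω => D₀ ω)
    (hident : P.map (fun ω => D ω) = P.map (fun ω => D₀ ω))
    (hvar : ∀ ℓ ∈ Icc (0 : ℝ) Lmax, Var[fun ω => D₀ ω ℓ; P] ≤ c₂ * Real.exp (-β * ℓ))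
    (hc₂ : 0 ≤ c₂)
    (hD : MemLp (fun p : Ω × ℝ => D p.1 p.2) 2 (P.prod (volume.restrict (Icc 0 Lmax)))) :
    Var[fun ω => ∫ ℓ in Icc 0 Lmax, levelWeight r L ℓ * D ω ℓ; P]
      ≤ c₂ * ∫ q, levelKernel (r - β / 2) L q
        ∂((volume.restrict (Icc 0 Lmax)).prod (volume.restrict (Icc 0 Lmax))) := by
  have hF := memLp_levelWeight_mul (L := L) hr hD
  have hIcc : ∀ᵐ t ∂(volume.restrict (Icc (0 : ℝ) Lmax)), t ∈ Icc 0 Lmax :=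
    ae_restrict_mem measurableSet_Icc
  rw [← covariance_self hF.integral_prod_left.aemeasurable, covariance_integral_integral hF hF,
    ← integral_const_mul]
  refine integral_mono_ae (integrable_covariance_slices hF hF)
    ((integrable_levelKernel _ _ _).const_mul _) ?_
  filter_upwards [Measure.quasiMeasurePreserving_fst.ae (hIcc.and hF.prod_left_ae_two),
    Measure.quasiMeasurePreserving_snd.ae (hIcc.and hF.prod_left_ae_two)] with q hq₁ hq₂
  exact covariance_levelWeight_mul_le hDm hD₀m hident hvar hc₂ hq₁.1 hq₂.1 hq₁.2 hq₂.2

lemma intervalIntegral_average_levelKernel {ι : Type*} [Fintype ι] (a c Lmax : ℝ) (L : ι → ℝ)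
    (hLmax : 0 ≤ Lmax) :
    ∫ ℓ in (0 : ℝ)..Lmax, ∫ ℓ' in (0 : ℝ)..Lmax,
        (c * ∑ k, (if max ℓ ℓ' ≤ L k then (1 : ℝ) else 0)) * Real.exp (a * ℓ) * Real.exp (a * ℓ')
      = c * ∑ k, ∫ q, levelKernel a (L k) q
          ∂((volume.restrict (Icc 0 Lmax)).prod (volume.restrict (Icc 0 Lmax))) := by
  have hK : ∀ k, Integrable (levelKernel a (L k))
      ((volume.restrict (Icc 0 Lmax)).prod (volume.restrict (Icc 0 Lmax))) := fun k =>
    integrable_levelKernel _ _ _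
  rw [← integral_finsetSum _ fun k _ => hK k, ← integral_const_mul,
    integral_prod _ ((integrable_finsetSum _ fun k _ => hK k).const_mul _)]
  simp only [intervalIntegral.integral_of_le hLmax, ← integral_Icc_eq_integral_Ioc, levelKernel,
    Finset.mul_sum, Finset.sum_mul, mul_assoc]

end WeightedProcess

theorem stmt_8_general {Ω : Type*} [MeasurableSpace Ω] (P : Measure Ω) [IsProbabilityMeasure P]
    (Lmax r β c₂ : ℝ) (M : ℕ)
    (hLmax : 0 < Lmax) (hr : 0 < r) (hc₂ : 0 < c₂)
    (D : Fin M → Ω → ℝ → ℝ) (D₀ : Ω → ℝ → ℝ)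
    (hD_meas : ∀ k, Measurable (Function.uncurry (D k)))
    (hD₀_meas : Measurable (Function.uncurry D₀))
    (hD_L2 : ∀ k, MemLp (fun p : Ω × ℝ => D k p.1 p.2) 2
      (P.prod (volume.restrict (Icc 0 Lmax))))
    (hD_indep : iIndepFun (fun k ω => D k ω) P)
    (hD_ident : ∀ k, Measure.map (fun ω => D k ω) P = Measure.map (fun ω => D₀ ω) P)
    (hvar : ∀ ℓ ∈ Icc (0 : ℝ) Lmax,
      variance (fun ω => D₀ ω ℓ) P ≤ c₂ * Real.exp (-β * ℓ))
    (L : Fin M → ℝ) :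
    variance (fun ω => (1 / (M : ℝ)) *
        ∑ k, ∫ ℓ in (0 : ℝ)..Lmax,
          Real.exp (r * ℓ) * D k ω ℓ * (if ℓ ≤ L k then (1 : ℝ) else 0)) P
      ≤ c₂ / M *
          ∫ ℓ in (0 : ℝ)..Lmax, ∫ ℓ' in (0 : ℝ)..Lmax,
            ((1 / (M : ℝ)) * ∑ k, (if max ℓ ℓ' ≤ L k then (1 : ℝ) else 0))
              * Real.exp ((r - β / 2) * ℓ) * Real.exp ((r - β / 2) * ℓ') := by
  set ν := volume.restrict (Icc (0 : ℝ) Lmax)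
  set X : Fin M → Ω → ℝ := fun k ω => ∫ ℓ in Icc 0 Lmax, levelWeight r (L k) ℓ * D k ω ℓ
  have hF : ∀ k, MemLp (fun p : Ω × ℝ => levelWeight r (L k) p.2 * D k p.1 p.2) 2 (P.prod ν) :=
    fun k => memLp_levelWeight_mul hr.le (hD_L2 k)
  have hLHS : (fun ω => (1 / (M : ℝ)) * ∑ k, ∫ ℓ in (0 : ℝ)..Lmax,
      Real.exp (r * ℓ) * D k ω ℓ * (if ℓ ≤ L k then (1 : ℝ) else 0))
        = fun ω => (1 / (M : ℝ)) * ∑ k, X k ω := by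
    simp only [X, levelWeight, intervalIntegral.integral_of_le hLmax.le,
      integral_Icc_eq_integral_Ioc, mul_right_comm]
  have huncorrelated : ∀ j k, j ≠ k → cov[X j, X k; P] = 0 := fun j k hjk =>
    covariance_integral_integral_eq_zero_of_indepFun (hF j) (hF k)
      ((hD_indep.indepFun hjk).comp
        (measurable_pi_lambda _ fun ℓ => (measurable_pi_apply ℓ).const_mul _)
        (measurable_pi_lambda _ fun ℓ => (measurable_pi_apply ℓ).const_mul _))
  have hdiag : ∀ k, Var[X k; P] ≤ c₂ * ∫ q, levelKernel (r - β / 2) (L k) q ∂(ν.prod ν) :=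
    fun k => variance_integral_levelWeight_mul_le hr.le
      (measurable_pi_lambda _ fun _ => (hD_meas k).of_uncurry_right)
      (measurable_pi_lambda _ fun _ => hD₀_meas.of_uncurry_right) (hD_ident k) hvar hc₂.le
      (hD_L2 k)
  rw [hLHS, intervalIntegral_average_levelKernel _ _ _ _ hLmax.le, variance_const_mul,
    variance_fun_sum_of_covariance_eq_zero (fun k => (hF k).integral_prod_left) huncorrelated]
  calc (1 / (M : ℝ)) ^ 2 * ∑ k, Var[X k; P]
      ≤ (1 / (M : ℝ)) ^ 2 * ∑ k, c₂ * ∫ q, levelKernel (r - β / 2) (L k) q ∂(ν.prod ν) := by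
        gcongr with k
        exact hdiag k
    _ = c₂ / M * (1 / M * ∑ k, ∫ q, levelKernel (r - β / 2) (L k) q ∂(ν.prod ν)) := by
        rw [← Finset.mul_sum]
        ring

/-- first variance estimate in the proof of Theorem 4.2. Let
`D⁽¹⁾, …, D⁽ᴹ⁾ : Ω × [0, L_max] → ℝ` be jointly measurable, square-integrable processes,
independent across `k` and identically distributed (with the same law as a process `D₀`),
with `Var[D₀(ℓ)] ≤ c₂·e^(−βℓ)`. For deterministic nonnegative levels `L⁽¹⁾, …, L⁽ᴹ⁾` and
`X⁽ᵏ⁾ := ∫_0^{L_max} e^(rℓ)·D⁽ᵏ⁾(ℓ)·1_{[0,L⁽ᵏ⁾]}(ℓ) dℓ` we have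
`Var[(1/M)∑ₖ X⁽ᵏ⁾]
  ≤ (c₂/M)·∫_0^{L_max}∫_0^{L_max} (1/M)∑ₖ 1_{[0,L⁽ᵏ⁾]}(max(ℓ,ℓ'))·e^((r−β/2)ℓ)·e^((r−β/2)ℓ') dℓ dℓ'`. -/
theorem stmt_8 {Ω : Type*} [MeasurableSpace Ω] (P : Measure Ω) [IsProbabilityMeasure P]
    (Lmax r β c₂ : ℝ) (M : ℕ)
    (hLmax : 0 < Lmax) (hr : 0 < r) (hβ : 0 < β) (hc₂ : 0 < c₂)
    (D : Fin M → Ω → ℝ → ℝ) (D₀ : Ω → ℝ → ℝ)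
    (hD_meas : ∀ k, Measurable (Function.uncurry (D k)))
    (hD₀_meas : Measurable (Function.uncurry D₀))
    (hD_L2 : ∀ k, MemLp (fun p : Ω × ℝ => D k p.1 p.2) 2
      (P.prod (volume.restrict (Icc 0 Lmax))))
    (hD_indep : iIndepFun (fun k ω => D k ω) P)
    (hD_ident : ∀ k, Measure.map (fun ω => D k ω) P = Measure.map (fun ω => D₀ ω) P)
    (hvar : ∀ ℓ ∈ Icc (0 : ℝ) Lmax,
      variance (fun ω => D₀ ω ℓ) P ≤ c₂ * Real.exp (-β * ℓ))
    (L : Fin M → ℝ) (hL0 : ∀ k, 0 ≤ L k) :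
    variance (fun ω => (1 / (M : ℝ)) *
        ∑ k, ∫ ℓ in (0 : ℝ)..Lmax,
          Real.exp (r * ℓ) * D k ω ℓ * (if ℓ ≤ L k then (1 : ℝ) else 0)) P
      ≤ c₂ / M *
          ∫ ℓ in (0 : ℝ)..Lmax, ∫ ℓ' in (0 : ℝ)..Lmax,
            ((1 / (M : ℝ)) * ∑ k, (if max ℓ ℓ' ≤ L k then (1 : ℝ) else 0))
              * Real.exp ((r - β / 2) * ℓ) * Real.exp ((r - β / 2) * ℓ') :=
  stmt_8_general P Lmax r β c₂ M hLmax hr hc₂ D D₀ hD_meas hD₀_meas hD_L2 hD_indep hD_ident hvar L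
end

section
/- Let α > 0, β > 0, r > 0, c₁ > 0, c₂ > 0, c_disc > 0. Define for ε ∈ (0, e^{−1}) the level Λ(ε) := (1/α)·ln(√2·c₁/(α·ε)), and define V(ε, M) := (c_disc·c₂/M²)·A + (c₂/M)·B with A and B as follows: A := (4/(2r−β)²)·(e^{(2r−β)Λ(ε)} + 1) if r ≠ β/2 and A := Λ(ε)² if r = β/2; B := 2/((r−β)(r−β/2))·e^{(r−β)Λ(ε)} + 4/(β(r−β/2))·e^{−(β/2)Λ(ε)} − 4/((r−β)β) if r ∉ {β/2, β}, B := 8/β² if r = β/2, and B := (4/β)·Λ(ε) + 8/β² if r = β. Then there exists a constant C > 0, independent of M and ε, such that for all ε ∈ (0, e^{−1}) and all M ∈ ℕ: V(ε, M) ≤ C·(1/M)·E(ε, M), where E(ε, M) := 1 if r < β/2; E(ε, M) := (ln ε)²/M + 1 if r = β/2; E(ε, M) := ε^{−(2r−β)/α}/M + 1 if β/2 < r < β; E(ε, M) := (ε^{−β/α}/M + 1)·|ln ε| if r = β; and E(ε, M) := (ε^{−r/α}/M + 1)·ε^{−(r−β)/α} if r > β. -/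
/-! Write `K = √2 c₁ / α`, so that `Λ(ε) = α⁻¹ log (K / ε)` and `exp (γ Λ(ε)) = K^(γ/α) ε^(-γ/α)`:
an exponential of the level is bounded by a constant when `γ ≤ 0` and is a power of `ε⁻¹`
otherwise, while `|Λ(ε)| ≤ α⁻¹ (|log K| + 1) |log ε|` because `|log ε| > 1`. In each of the five
regimes this gives `A ≤ p F G + p'` and `B ≤ q G` with constants `p, p', q` and `G ≥ 1`, and
`1/M² ≤ 1/M` turns these into `V ≤ C (1/M) (F/M + 1) G`, which is the claimed `E`
(at `M = 0` both sides vanish since `x / 0 = 0`). -/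

open Set Real

noncomputable def level (α K ε : ℝ) : ℝ := 1 / α * log (K / ε)

noncomputable def expTerm (γ L : ℝ) : ℝ := 4 / γ ^ 2 * (exp (γ * L) + 1)

noncomputable def mixedTerm (β r L : ℝ) : ℝ :=
  2 / ((r - β) * (r - β / 2)) * exp ((r - β) * L) + 4 / (β * (r - β / 2)) * exp (-(β / 2) * L)
    - 4 / ((r - β) * β)

/-- With `a = c_disc c₂` and `b = c₂`, the left-hand side is `V(ε, M)`. -/
def VarianceBoundedBy (a b : ℝ) (A B : ℝ → ℝ) (E : ℝ → ℕ → ℝ) : Prop :=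
  ∃ C > 0, ∀ ε ∈ Ioo (0 : ℝ) (exp (-1)), ∀ M : ℕ,
    a / (M : ℝ) ^ 2 * A ε + b / M * B ε ≤ C * (1 / M) * E ε M

section Level

variable {α K ε : ℝ}

theorem exp_mul_level (hK : 0 < K) (hε : 0 < ε) (γ : ℝ) :
    exp (γ * level α K ε) = K ^ (γ / α) * ε ^ (-γ / α) := by
  rw [level, show γ * (1 / α * log (K / ε)) = log (K / ε) * (γ / α) by ring,
    ← rpow_def_of_pos (div_pos hK hε), div_rpow hK.le hε.le, neg_div, rpow_neg hε.le,
    div_eq_mul_inv]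

theorem exp_mul_level_le (hα : 0 < α) (hK : 0 < K) (hε : 0 < ε) (hε₁ : ε ≤ 1) {γ : ℝ}
    (hγ : γ ≤ 0) : exp (γ * level α K ε) ≤ K ^ (γ / α) := by
  rw [exp_mul_level hK hε]
  refine mul_le_of_le_one_right (by positivity) (rpow_le_one hε.le hε₁ ?_)
  exact div_nonneg (neg_nonneg.2 hγ) hα.le

theorem one_lt_abs_log (hε : 0 < ε) (hε' : ε < exp (-1)) : 1 < |log ε| := by
  have := (log_lt_log hε hε').trans_eq (log_exp _)
  rw [abs_of_neg (by linarith)]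
  linarith

theorem abs_level_le (hα : 0 < α) (hK : 0 < K) (hε : 0 < ε) (hε' : ε < exp (-1)) :
    |level α K ε| ≤ (|log K| + 1) / α * |log ε| := by
  have h1 := one_lt_abs_log hε hε'
  rw [level, log_div hK.ne' hε.ne', abs_mul, abs_of_pos (by positivity), one_div_mul_eq_div,
    div_mul_eq_mul_div]
  gcongr
  calc |log K - log ε| ≤ |log K| + |log ε| := abs_sub _ _
    _ ≤ (|log K| + 1) * |log ε| := by nlinarith [abs_nonneg (log K)]

end Level

section Terms

variable {α β r K ε : ℝ}

theorem expTerm_level (hK : 0 < K) (hε : 0 < ε) (γ : ℝ) :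
    expTerm γ (level α K ε) = 4 / γ ^ 2 * K ^ (γ / α) * ε ^ (-γ / α) + 4 / γ ^ 2 := by
  rw [expTerm, exp_mul_level hK hε]
  ring

theorem expTerm_level_le_of_nonpos (hα : 0 < α) (hK : 0 < K) (hε : 0 < ε) (hε₁ : ε ≤ 1)
    {γ : ℝ} (hγ : γ ≤ 0) : expTerm γ (level α K ε) ≤ 4 / γ ^ 2 * (K ^ (γ / α) + 1) := by
  rw [expTerm]
  gcongr
  exact exp_mul_level_le hα hK hε hε₁ hγ

theorem mixedTerm_level_le_of_lt_half (hα : 0 < α) (hβ : 0 < β) (hK : 0 < K) (hε : 0 < ε)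
    (hε₁ : ε ≤ 1) (hr : r < β / 2) :
    mixedTerm β r (level α K ε) ≤
      2 / ((β - r) * (β / 2 - r)) * K ^ ((r - β) / α) + 4 / ((β - r) * β) := by
  have h₁ : 0 < β - r := by linarith
  have h₂ : 0 < β / 2 - r := by linarith
  have hneg : 4 / (β * (r - β / 2)) * exp (-(β / 2) * level α K ε) ≤ 0 :=
    mul_nonpos_of_nonpos_of_nonneg
      (div_nonpos_of_nonneg_of_nonpos (by norm_num) (by nlinarith)) (exp_pos _).le
  have hfirst : 2 / ((r - β) * (r - β / 2)) * exp ((r - β) * level α K ε) ≤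
      2 / ((β - r) * (β / 2 - r)) * K ^ ((r - β) / α) := by
    rw [show (r - β) * (r - β / 2) = (β - r) * (β / 2 - r) by ring]
    gcongr
    exact exp_mul_level_le hα hK hε hε₁ (by linarith)
  rw [mixedTerm, show (r - β) * β = -((β - r) * β) by ring, div_neg]
  linarith

theorem mixedTerm_level_le_of_half_lt_of_lt (hα : 0 < α) (hβ : 0 < β) (hK : 0 < K) (hε : 0 < ε)
    (hε₁ : ε ≤ 1) (hr₁ : β / 2 < r) (hr₂ : r < β) :
    mixedTerm β r (level α K ε) ≤
      4 / (β * (r - β / 2)) * K ^ (-(β / 2) / α) + 4 / ((β - r) * β) := by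
  have h₁ : 0 < β - r := by linarith
  have h₂ : 0 < r - β / 2 := by linarith
  have hneg : 2 / ((r - β) * (r - β / 2)) * exp ((r - β) * level α K ε) ≤ 0 :=
    mul_nonpos_of_nonpos_of_nonneg
      (div_nonpos_of_nonneg_of_nonpos (by norm_num) (by nlinarith)) (exp_pos _).le
  have hsecond : 4 / (β * (r - β / 2)) * exp (-(β / 2) * level α K ε) ≤
      4 / (β * (r - β / 2)) * K ^ (-(β / 2) / α) := by
    gcongr
    exact exp_mul_level_le hα hK hε hε₁ (by linarith)
  rw [mixedTerm, show (r - β) * β = -((β - r) * β) by ring, div_neg]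
  linarith

theorem mixedTerm_level_le_of_lt (hα : 0 < α) (hβ : 0 < β) (hK : 0 < K) (hε : 0 < ε)
    (hε₁ : ε ≤ 1) (hr : β < r) :
    mixedTerm β r (level α K ε) ≤
      (2 / ((r - β) * (r - β / 2)) * K ^ ((r - β) / α) + 4 / (β * (r - β / 2)) * K ^ (-(β / 2) / α))
        * ε ^ (-(r - β) / α) := by
  have h₁ : 0 < r - β := by linarith
  have h₂ : 0 < r - β / 2 := by linarith
  have hG : 1 ≤ ε ^ (-(r - β) / α) :=
    one_le_rpow_of_pos_of_le_one_of_nonpos hε hε₁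
      (div_nonpos_of_nonpos_of_nonneg (by linarith) hα.le)
  have hsecond : 4 / (β * (r - β / 2)) * exp (-(β / 2) * level α K ε) ≤
      4 / (β * (r - β / 2)) * K ^ (-(β / 2) / α) * ε ^ (-(r - β) / α) := by
    calc _ ≤ 4 / (β * (r - β / 2)) * K ^ (-(β / 2) / α) := by
          gcongr
          exact exp_mul_level_le hα hK hε hε₁ (by linarith)
      _ ≤ _ := le_mul_of_one_le_right (by positivity) hG
  have hlast : 0 ≤ 4 / ((r - β) * β) := by positivity
  rw [mixedTerm, exp_mul_level hK hε]
  nlinarith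

end Terms

theorem div_sq_mul_add_div_mul_le {a b p p' q A B F G : ℝ} (M : ℕ) (ha : 0 ≤ a) (hb : 0 ≤ b)
    (hp : 0 ≤ p) (hp' : 0 ≤ p') (hq : 0 ≤ q) (hF : 0 ≤ F) (hG : 1 ≤ G)
    (hA : A ≤ p * (F * G) + p') (hB : B ≤ q * G) :
    a / (M : ℝ) ^ 2 * A + b / M * B ≤ (a * (p + p') + b * q) * (1 / M) * ((F / M + 1) * G) := by
  rcases M.eq_zero_or_pos with rfl | hM
  · simp
  have hM₁ : (1 : ℝ) ≤ M := by exact_mod_cast hM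
  have hX : 0 ≤ F / M * G := by positivity
  have hp'G : p' / M ≤ p' * G :=
    (div_le_self hp' hM₁).trans (le_mul_of_one_le_right hp' hG)
  calc a / (M : ℝ) ^ 2 * A + b / M * B
      ≤ a / (M : ℝ) ^ 2 * (p * (F * G) + p') + b / M * (q * G) := by gcongr
    _ = 1 / M * (a * p * (F / M * G) + a * (p' / M) + b * q * G) := by field_simp
    _ ≤ 1 / M * (a * p * (F / M * G) + a * (p' * G) + b * q * G) := by gcongr
    _ ≤ (a * (p + p') + b * q) * (1 / M) * ((F / M + 1) * G) := by
      rw [show (a * (p + p') + b * q) * (1 / M) * ((F / M + 1) * G)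
        = 1 / M * ((a * (p + p') + b * q) * (F / M * G + G)) by ring]
      gcongr 1 / M * ?_
      nlinarith [mul_nonneg (mul_nonneg ha hp') hX, mul_nonneg (mul_nonneg hb hq) hX,
        mul_nonneg (mul_nonneg ha hp) (zero_le_one.trans hG)]

theorem VarianceBoundedBy.of_le {a b p p' q : ℝ} {A B F G : ℝ → ℝ} {E : ℝ → ℕ → ℝ}
    (ha : 0 ≤ a) (hb : 0 ≤ b) (hp : 0 ≤ p) (hp' : 0 ≤ p') (hq : 0 ≤ q)
    (hF : ∀ ε ∈ Ioo (0 : ℝ) (exp (-1)), 0 ≤ F ε) (hG : ∀ ε ∈ Ioo (0 : ℝ) (exp (-1)), 1 ≤ G ε)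
    (hA : ∀ ε ∈ Ioo (0 : ℝ) (exp (-1)), A ε ≤ p * (F ε * G ε) + p')
    (hB : ∀ ε ∈ Ioo (0 : ℝ) (exp (-1)), B ε ≤ q * G ε)
    (hE : ∀ ε M, E ε M = (F ε / M + 1) * G ε) :
    VarianceBoundedBy a b A B E := by
  refine ⟨a * (p + p') + b * q + 1, by positivity, fun ε hε M => ?_⟩
  have hF := hF ε hε
  have hG := hG ε hε
  calc _ ≤ (a * (p + p') + b * q) * (1 / M) * ((F ε / M + 1) * G ε) :=
        div_sq_mul_add_div_mul_le M ha hb hp hp' hq hF hG (hA ε hε) (hB ε hε)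
    _ ≤ _ := by rw [hE]; gcongr ?_ * _ * _; linarith

theorem le_one_of_lt_exp_neg_one {ε : ℝ} (h : ε < exp (-1)) : ε ≤ 1 :=
  h.le.trans (exp_le_one_iff.2 (by norm_num))

section Cases

variable {α β r K a b : ℝ}

theorem varianceBoundedBy_of_lt_half (hα : 0 < α) (hβ : 0 < β) (hK : 0 < K) (ha : 0 ≤ a)
    (hb : 0 ≤ b) (hr : r < β / 2) :
    VarianceBoundedBy a b (fun ε => expTerm (2 * r - β) (level α K ε))
      (fun ε => mixedTerm β r (level α K ε)) (fun _ _ => 1) := by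
  have h₁ : 0 < β - r := by linarith
  have h₂ : 0 < β / 2 - r := by linarith
  refine .of_le (F := fun _ => 0) (G := fun _ => 1) (p := 0) ha hb le_rfl
    (by positivity : 0 ≤ 4 / (2 * r - β) ^ 2 * (K ^ ((2 * r - β) / α) + 1))
    (by positivity : 0 ≤ 2 / ((β - r) * (β / 2 - r)) * K ^ ((r - β) / α) + 4 / ((β - r) * β))
    (fun _ _ => le_rfl) (fun _ _ => le_rfl) (fun ε hε => ?_) (fun ε hε => ?_) (fun _ _ => by simp)
  · simpa using expTerm_level_le_of_nonpos hα hK hε.1 (le_one_of_lt_exp_neg_one hε.2)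
      (by linarith)
  · simpa using mixedTerm_level_le_of_lt_half hα hβ hK hε.1 (le_one_of_lt_exp_neg_one hε.2) hr

theorem varianceBoundedBy_half (hα : 0 < α) (hK : 0 < K) (ha : 0 ≤ a) (hb : 0 ≤ b) (β : ℝ) :
    VarianceBoundedBy a b (fun ε => level α K ε ^ 2) (fun _ => 8 / β ^ 2)
      (fun ε M => log ε ^ 2 / M + 1) := by
  refine .of_le (F := fun ε => log ε ^ 2) (G := fun _ => 1) (p' := 0) ha hb
    (sq_nonneg ((|log K| + 1) / α)) le_rfl (by positivity : 0 ≤ 8 / β ^ 2) (fun _ _ => sq_nonneg _)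
    (fun _ _ => le_rfl) (fun ε hε => ?_)
    (fun _ _ => (mul_one _).ge) (fun _ _ => (mul_one _).symm)
  calc level α K ε ^ 2 = |level α K ε| ^ 2 := (sq_abs _).symm
    _ ≤ ((|log K| + 1) / α * |log ε|) ^ 2 := by gcongr; exact abs_level_le hα hK hε.1 hε.2
    _ = _ := by rw [mul_pow, sq_abs]; ring

theorem varianceBoundedBy_of_half_lt_of_lt (hα : 0 < α) (hβ : 0 < β) (hK : 0 < K) (ha : 0 ≤ a)
    (hb : 0 ≤ b) (hr₁ : β / 2 < r) (hr₂ : r < β) :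
    VarianceBoundedBy a b (fun ε => expTerm (2 * r - β) (level α K ε))
      (fun ε => mixedTerm β r (level α K ε)) (fun ε M => ε ^ (-(2 * r - β) / α) / M + 1) := by
  have h₁ : 0 < β - r := by linarith
  have h₂ : 0 < r - β / 2 := by linarith
  refine .of_le (G := fun _ => 1) ha hb
    (by positivity : 0 ≤ 4 / (2 * r - β) ^ 2 * K ^ ((2 * r - β) / α))
    (by positivity : 0 ≤ 4 / (2 * r - β) ^ 2)
    (by positivity : 0 ≤ 4 / (β * (r - β / 2)) * K ^ (-(β / 2) / α) + 4 / ((β - r) * β))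
    (fun ε hε => rpow_nonneg hε.1.le _) (fun _ _ => le_rfl) (fun ε hε => ?_) (fun ε hε => ?_)
    (fun _ _ => (mul_one _).symm)
  · rw [expTerm_level hK hε.1, mul_one]
  · simpa using mixedTerm_level_le_of_half_lt_of_lt hα hβ hK hε.1
      (le_one_of_lt_exp_neg_one hε.2) hr₁ hr₂

theorem varianceBoundedBy_self (hα : 0 < α) (hβ : 0 < β) (hK : 0 < K) (ha : 0 ≤ a)
    (hb : 0 ≤ b) :
    VarianceBoundedBy a b (fun ε => expTerm β (level α K ε))
      (fun ε => 4 / β * level α K ε + 8 / β ^ 2)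
      (fun ε M => (ε ^ (-β / α) / M + 1) * |log ε|) := by
  refine .of_le ha hb
    (by positivity : 0 ≤ 4 / β ^ 2 * K ^ (β / α)) (by positivity : 0 ≤ 4 / β ^ 2)
    (by positivity : 0 ≤ 4 / β * ((|log K| + 1) / α) + 8 / β ^ 2)
    (fun ε hε => rpow_nonneg hε.1.le _) (fun ε hε => (one_lt_abs_log hε.1 hε.2).le)
    (fun ε hε => ?_) (fun ε hε => ?_) (fun _ _ => rfl)
  · have hlog := one_lt_abs_log hε.1 hε.2
    rw [expTerm_level hK hε.1]
    gcongr
    exact le_mul_of_one_le_right (rpow_nonneg hε.1.le _) hlog.le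
  · have hlog := one_lt_abs_log hε.1 hε.2
    have hL := (le_abs_self _).trans (abs_level_le hα hK hε.1 hε.2)
    calc 4 / β * level α K ε + 8 / β ^ 2
        ≤ 4 / β * ((|log K| + 1) / α * |log ε|) + 8 / β ^ 2 * |log ε| := by
          gcongr
          exact le_mul_of_one_le_right (by positivity) hlog.le
      _ = _ := by ring

theorem varianceBoundedBy_of_lt (hα : 0 < α) (hβ : 0 < β) (hK : 0 < K) (ha : 0 ≤ a)
    (hb : 0 ≤ b) (hr : β < r) :
    VarianceBoundedBy a b (fun ε => expTerm (2 * r - β) (level α K ε))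
      (fun ε => mixedTerm β r (level α K ε))
      (fun ε M => (ε ^ (-r / α) / M + 1) * ε ^ (-(r - β) / α)) := by
  have h₁ : 0 < r - β := by linarith
  have h₂ : 0 < r - β / 2 := by linarith
  refine .of_le ha hb
    (by positivity : 0 ≤ 4 / (2 * r - β) ^ 2 * K ^ ((2 * r - β) / α))
    (by positivity : 0 ≤ 4 / (2 * r - β) ^ 2)
    (by positivity : 0 ≤ 2 / ((r - β) * (r - β / 2)) * K ^ ((r - β) / α)
      + 4 / (β * (r - β / 2)) * K ^ (-(β / 2) / α))
    (fun ε hε => rpow_nonneg hε.1.le _)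
    (fun ε hε => one_le_rpow_of_pos_of_le_one_of_nonpos hε.1 (le_one_of_lt_exp_neg_one hε.2)
      (div_nonpos_of_nonpos_of_nonneg (by linarith) hα.le))
    (fun ε hε => ?_) (fun ε hε => ?_) (fun _ _ => rfl)
  · rw [expTerm_level hK hε.1, ← rpow_add hε.1, ← add_div,
      show -r + -(r - β) = -(2 * r - β) by ring]
  · exact mixedTerm_level_le_of_lt hα hβ hK hε.1 (le_one_of_lt_exp_neg_one hε.2) hr

end Cases

theorem stmt_12_general (α β r c₁ c₂ c_disc : ℝ)
    (hα : 0 < α) (hβ : 0 < β) (hc₁ : 0 < c₁) (hc₂ : 0 < c₂)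
    (hcd : 0 < c_disc)
    (Λ : ℝ → ℝ) (hΛ : ∀ ε : ℝ, Λ ε = 1 / α * Real.log (Real.sqrt 2 * c₁ / (α * ε))) :
    ∃ C > (0 : ℝ), ∀ ε ∈ Ioo (0 : ℝ) (Real.exp (-1)), ∀ M : ℕ,
      c_disc * c₂ / (M : ℝ) ^ 2 *
          (if r = β / 2 then (Λ ε) ^ 2
           else 4 / (2 * r - β) ^ 2 * (Real.exp ((2 * r - β) * Λ ε) + 1))
        + c₂ / M *
          (if r = β / 2 then 8 / β ^ 2
           else if r = β then 4 / β * Λ ε + 8 / β ^ 2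
           else
              2 / ((r - β) * (r - β / 2)) * Real.exp ((r - β) * Λ ε)
                + 4 / (β * (r - β / 2)) * Real.exp (-(β / 2) * Λ ε)
                - 4 / ((r - β) * β))
      ≤ C * (1 / (M : ℝ)) *
          (if r < β / 2 then 1
           else if r = β / 2 then (Real.log ε) ^ 2 / M + 1
           else if r < β then ε ^ (-(2 * r - β) / α) / M + 1
           else if r = β then (ε ^ (-β / α) / M + 1) * |Real.log ε|
           else (ε ^ (-r / α) / M + 1) * ε ^ (-(r - β) / α)) := by
  have hK : 0 < √2 * c₁ / α := by positivity
  obtain rfl : Λ = level α (√2 * c₁ / α) := funext fun ε => by rw [hΛ, level, div_div]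
  have ha : 0 ≤ c_disc * c₂ := by positivity
  rcases lt_trichotomy r (β / 2) with hr | rfl | hr
  · simp only [if_pos hr, if_neg hr.ne, if_neg (show r ≠ β by linarith)]
    exact varianceBoundedBy_of_lt_half hα hβ hK ha hc₂.le hr
  · simp only [if_pos, lt_irrefl, if_false]
    exact varianceBoundedBy_half hα hK ha hc₂.le β
  rcases lt_trichotomy r β with hr' | rfl | hr'
  · simp only [if_neg hr.ne', if_neg hr.asymm, if_neg hr'.ne, if_pos hr']
    exact varianceBoundedBy_of_half_lt_of_lt hα hβ hK ha hc₂.le hr hr'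
  · simp only [if_neg hr.ne', if_neg hr.asymm, if_pos, lt_irrefl, if_false, two_mul,
      add_sub_cancel_right]
    exact varianceBoundedBy_self hα hβ hK ha hc₂.le
  · simp only [if_neg hr.ne', if_neg hr.asymm, if_neg hr'.ne', if_neg hr'.asymm]
    exact varianceBoundedBy_of_lt hα hβ hK ha hc₂.le hr'

/-- five-case bound on the variance upper bound, proof of Theorem 4.2.
With the level `Λ(ε) := (1/α)·ln(√2·c₁/(α·ε))` and the explicit variance upper bound
`V(ε, M) := (c_disc·c₂/M²)·A + (c₂/M)·B` (with case-defined `A`, `B`), there exists a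
constant `C > 0`, independent of `M` and `ε`, such that for all `ε ∈ (0, e⁻¹)` and all
`M ∈ ℕ`, `V(ε, M) ≤ C·(1/M)·E(ε, M)` with the five-case factor `E(ε, M)` of the paper. -/
theorem stmt_12 (α β r c₁ c₂ c_disc : ℝ)
    (hα : 0 < α) (hβ : 0 < β) (hr : 0 < r) (hc₁ : 0 < c₁) (hc₂ : 0 < c₂)
    (hcd : 0 < c_disc)
    (Λ : ℝ → ℝ) (hΛ : ∀ ε : ℝ, Λ ε = 1 / α * Real.log (Real.sqrt 2 * c₁ / (α * ε))) :
    ∃ C > (0 : ℝ), ∀ ε ∈ Ioo (0 : ℝ) (Real.exp (-1)), ∀ M : ℕ,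
      c_disc * c₂ / (M : ℝ) ^ 2 *
          (if r = β / 2 then (Λ ε) ^ 2
           else 4 / (2 * r - β) ^ 2 * (Real.exp ((2 * r - β) * Λ ε) + 1))
        + c₂ / M *
          (if r = β / 2 then 8 / β ^ 2
           else if r = β then 4 / β * Λ ε + 8 / β ^ 2
           else
              2 / ((r - β) * (r - β / 2)) * Real.exp ((r - β) * Λ ε)
                + 4 / (β * (r - β / 2)) * Real.exp (-(β / 2) * Λ ε)
                - 4 / ((r - β) * β))
      ≤ C * (1 / (M : ℝ)) *
          (if r < β / 2 then 1
           else if r = β / 2 then (Real.log ε) ^ 2 / M + 1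
           else if r < β then ε ^ (-(2 * r - β) / α) / M + 1
           else if r = β then (ε ^ (-β / α) / M + 1) * |Real.log ε|
           else (ε ^ (-r / α) / M + 1) * ε ^ (-(r - β) / α)) :=
  stmt_12_general α β r c₁ c₂ c_disc hα hβ hc₁ hc₂ hcd Λ hΛ
end

section
/- Let α > 0, r > 0, c₁ > 0, c_disc > 0. Define for ε ∈ (0, e^{−1}) the level Λ(ε) := (1/α)·ln(√2·c₁/(α·ε)), and define B₂(ε, M) := (c_disc²/M²)·c₁²·Λ(ε)² + (c_disc/M)·(2c₁²/α)·Λ(ε)·e^{−αΛ(ε)} if r = α, and B₂(ε, M) := (c_disc²/M²)·c₁²·(1/(r−α)²)·(e^{2(r−α)Λ(ε)} + 1) + (c_disc/M)·(2c₁²/α)·(1/(r−α))·(e^{(r−2α)Λ(ε)} − e^{−αΛ(ε)}) if r ≠ α. Then there exists a constant C > 0, independent of M and ε, such that for all ε ∈ (0, e^{−1}) and all M ∈ ℕ: B₂(ε, M) ≤ C·(1/M)·E(ε, M), where E(ε, M) := 1 if r < α; E(ε, M) := (ln ε)²/M + 1 if r = α; E(ε, M) := ε^{−2}/M + 1 if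 α < r ≤ 2α; and E(ε, M) := (ε^{−r/α}/M + 1)·ε^{−(r−2α)/α} if r > 2α. -/
open Set Real

/-!
With `K = √2 c₁ / α` one has `exp (c Λ(ε)) = K^(c/α) ε^(-c/α)`, so for `r ≠ α` every exponential
in `B₂` is a constant times a power of `ε`, and on `(0, 1]` the power `ε^(-p)` is dominated by
`ε^(-q)` whenever `p ≤ q`. For `r = α` one uses instead `Λ(ε)² ≲ (ln ε)²` (because `|ln ε| ≥ 1`)
and `Λ e^(-αΛ) ≤ e⁻¹/α`. Writing `B₂ = M⁻² A(ε) + M⁻¹ B(ε)`, each regime of `r` amounts to a choice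
of dominating powers for `A` and `B`, and `M⁻² ≤ M⁻¹` absorbs the first term when `r < α`.
-/

lemma exp_mul_log_div_eq {K ε : ℝ} (hK : 0 < K) (hε : 0 < ε) (α c : ℝ) :
    exp (c * (1 / α * log (K / ε))) = K ^ (c / α) * ε ^ (-(c / α)) := by
  rw [show c * (1 / α * log (K / ε)) = log (K / ε) * (c / α) by ring,
    ← rpow_def_of_pos (div_pos hK hε), div_rpow hK.le hε.le, rpow_neg hε.le, div_eq_mul_inv]

lemma exp_mul_log_div_le {K ε α c q : ℝ} (hK : 0 < K) (hε₀ : 0 < ε) (hε₁ : ε ≤ 1)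
    (hq : c / α ≤ q) :
    exp (c * (1 / α * log (K / ε))) ≤ K ^ (c / α) * ε ^ (-q) := by
  rw [exp_mul_log_div_eq hK hε₀]
  exact mul_le_mul_of_nonneg_left (rpow_le_rpow_of_exponent_ge hε₀ hε₁ (neg_le_neg hq))
    (rpow_nonneg hK.le _)

lemma log_div_sq_le {K ε : ℝ} (hK : 0 < K) (hε : 0 < ε) (hlog : log ε ≤ -1) :
    log (K / ε) ^ 2 ≤ ((|log K| + 1) * log ε) ^ 2 := by
  have h1 : 1 ≤ |log ε| := by rw [abs_of_neg (by linarith)]; linarith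
  have habs : |log (K / ε)| ≤ |(|log K| + 1) * log ε| := by
    rw [log_div hK.ne' hε.ne', abs_mul, abs_of_pos (a := |log K| + 1) (by positivity)]
    nlinarith [abs_sub (log K) (log ε), abs_nonneg (log K)]
  exact sq_le_sq.mpr habs

lemma mul_exp_neg_mul_le {α : ℝ} (hα : 0 < α) (L : ℝ) :
    L * exp (-α * L) ≤ exp (-1) / α := by
  rw [le_div_iff₀ hα, neg_mul]
  linarith [mul_exp_neg_le_exp_neg_one (α * L)]

lemma sq_mul_add_mul_le {u A B F G C₁ C₂ C : ℝ} (hu : 0 ≤ u) (hA : A ≤ C₁ * F) (hB : B ≤ C₂ * G)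
    (hC₁ : 0 ≤ C₁) (hC₂ : 0 ≤ C₂) (hF : 0 ≤ F) (hG : 0 ≤ G) (hC : C₁ + C₂ ≤ C) :
    u ^ 2 * A + u * B ≤ C * u * (u * F + G) := by
  have huFG : 0 ≤ u * (u * F + G) := by positivity
  calc u ^ 2 * A + u * B ≤ u ^ 2 * (C₁ * F) + u * (C₂ * G) := by gcongr
    _ ≤ (C₁ + C₂) * (u * (u * F + G)) := by
      nlinarith [mul_nonneg (mul_nonneg hC₂ (sq_nonneg u)) hF, mul_nonneg (mul_nonneg hC₁ hu) hG]
    _ ≤ C * u * (u * F + G) := by rw [mul_assoc]; exact mul_le_mul_of_nonneg_right hC huFG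

lemma mul_sub_le_abs_mul_add {x y z : ℝ} (hy : 0 ≤ y) (hz : 0 ≤ z) :
    x * (y - z) ≤ |x| * (y + z) := by
  nlinarith [mul_le_mul_of_nonneg_right (le_abs_self x) hy,
    mul_le_mul_of_nonneg_right (neg_abs_le x) hz]

theorem discBias_le_of_ne {α r c₁ c_disc K qF qG : ℝ} (hα : 0 < α) (hK : 0 < K)
    (Λ : ℝ → ℝ) (hΛ : ∀ ε, Λ ε = 1 / α * log (K / ε))
    (hqF : 2 * (r - α) / α ≤ qF) (hqF₀ : 0 ≤ qF) (hqG : (r - 2 * α) / α ≤ qG) (hqG₁ : -1 ≤ qG) :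
    ∃ C > (0 : ℝ), ∀ ε ∈ Ioc (0 : ℝ) 1, ∀ M : ℕ,
      c_disc ^ 2 / (M : ℝ) ^ 2 * c₁ ^ 2 * (1 / (r - α) ^ 2) * (exp (2 * (r - α) * Λ ε) + 1)
          + c_disc / M * (2 * c₁ ^ 2 / α) * (1 / (r - α)) *
            (exp ((r - 2 * α) * Λ ε) - exp (-α * Λ ε))
        ≤ C * (1 / (M : ℝ)) * (ε ^ (-qF) / M + ε ^ (-qG)) := by
  set D := c_disc ^ 2 * c₁ ^ 2 * (1 / (r - α) ^ 2)
  set c := c_disc * (2 * c₁ ^ 2 / α) * (1 / (r - α))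
  refine ⟨D * (K ^ (2 * (r - α) / α) + 1) + |c| * (K ^ ((r - 2 * α) / α) + K ^ (-α / α)) + 1,
    by positivity, fun ε ⟨hε₀, hε₁⟩ M => ?_⟩
  have hA : D * (exp (2 * (r - α) * Λ ε) + 1) ≤ D * (K ^ (2 * (r - α) / α) + 1) * ε ^ (-qF) := by
    have hexp := exp_mul_log_div_le hK hε₀ hε₁ hqF
    have hone : 1 ≤ ε ^ (-qF) := one_le_rpow_of_pos_of_le_one_of_nonpos hε₀ hε₁ (by linarith)
    rw [mul_assoc D, hΛ]
    refine mul_le_mul_of_nonneg_left ?_ (by positivity : 0 ≤ D)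
    linarith
  have hB : c * (exp ((r - 2 * α) * Λ ε) - exp (-α * Λ ε))
      ≤ |c| * (K ^ ((r - 2 * α) / α) + K ^ (-α / α)) * ε ^ (-qG) := by
    have hα₁ : -α / α ≤ qG := by rwa [neg_div, div_self hα.ne']
    refine (mul_sub_le_abs_mul_add (exp_pos _).le (exp_pos _).le).trans ?_
    rw [mul_assoc, add_mul, hΛ]
    gcongr
    · exact exp_mul_log_div_le hK hε₀ hε₁ hqG
    · exact exp_mul_log_div_le hK hε₀ hε₁ hα₁
  convert sq_mul_add_mul_le (u := 1 / (M : ℝ)) (by positivity) hA hB (by positivity)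
    (by positivity) (by positivity) (by positivity) (le_add_of_nonneg_right zero_le_one)
    using 1 <;> ring

theorem discBias_le_of_eq {α c₁ c_disc K : ℝ} (hα : 0 < α) (hK : 0 < K) (hcd : 0 ≤ c_disc)
    (Λ : ℝ → ℝ) (hΛ : ∀ ε, Λ ε = 1 / α * log (K / ε)) :
    ∃ C > (0 : ℝ), ∀ ε ∈ Ioo (0 : ℝ) (exp (-1)), ∀ M : ℕ,
      c_disc ^ 2 / (M : ℝ) ^ 2 * c₁ ^ 2 * (Λ ε) ^ 2
          + c_disc / M * (2 * c₁ ^ 2 / α) * Λ ε * exp (-α * Λ ε)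
        ≤ C * (1 / (M : ℝ)) * ((log ε) ^ 2 / M + 1) := by
  set D := c_disc ^ 2 * c₁ ^ 2
  set c := c_disc * (2 * c₁ ^ 2 / α)
  refine ⟨D * ((|log K| + 1) / α) ^ 2 + c * (exp (-1) / α) + 1, by positivity,
    fun ε ⟨hε₀, hε⟩ M => ?_⟩
  have hlog : log ε ≤ -1 := by simpa using log_le_log hε₀ hε.le
  have hA : D * Λ ε ^ 2 ≤ D * ((|log K| + 1) / α) ^ 2 * log ε ^ 2 := by
    rw [mul_assoc D, hΛ]
    refine mul_le_mul_of_nonneg_left ?_ (by positivity : 0 ≤ D)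
    calc (1 / α * log (K / ε)) ^ 2 = (1 / α) ^ 2 * log (K / ε) ^ 2 := mul_pow _ _ _
      _ ≤ (1 / α) ^ 2 * ((|log K| + 1) * log ε) ^ 2 :=
          mul_le_mul_of_nonneg_left (log_div_sq_le hK hε₀ hlog) (by positivity)
      _ = ((|log K| + 1) / α) ^ 2 * log ε ^ 2 := by ring
  have hB : c * (Λ ε * exp (-α * Λ ε)) ≤ c * (exp (-1) / α) * 1 := by
    rw [mul_one]
    exact mul_le_mul_of_nonneg_left (mul_exp_neg_mul_le hα _) (by positivity)
  convert sq_mul_add_mul_le (u := 1 / (M : ℝ)) (by positivity) hA hB (by positivity)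
    (by positivity) (sq_nonneg _) zero_le_one (le_add_of_nonneg_right zero_le_one)
    using 1 <;> ring

theorem stmt_13_general (α r c₁ c_disc : ℝ)
    (hα : 0 < α) (hc₁ : 0 < c₁) (hcd : 0 < c_disc)
    (Λ : ℝ → ℝ) (hΛ : ∀ ε : ℝ, Λ ε = 1 / α * Real.log (Real.sqrt 2 * c₁ / (α * ε))) :
    ∃ C > (0 : ℝ), ∀ ε ∈ Ioo (0 : ℝ) (Real.exp (-1)), ∀ M : ℕ,
      (if r = α then
          c_disc ^ 2 / (M : ℝ) ^ 2 * c₁ ^ 2 * (Λ ε) ^ 2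
            + c_disc / M * (2 * c₁ ^ 2 / α) * Λ ε * Real.exp (-α * Λ ε)
       else
          c_disc ^ 2 / (M : ℝ) ^ 2 * c₁ ^ 2 * (1 / (r - α) ^ 2) *
              (Real.exp (2 * (r - α) * Λ ε) + 1)
            + c_disc / M * (2 * c₁ ^ 2 / α) * (1 / (r - α)) *
              (Real.exp ((r - 2 * α) * Λ ε) - Real.exp (-α * Λ ε)))
      ≤ C * (1 / (M : ℝ)) *
          (if r < α then 1
           else if r = α then (Real.log ε) ^ 2 / M + 1
           else if r ≤ 2 * α then ε ^ (-2 : ℝ) / M + 1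
           else (ε ^ (-r / α) / M + 1) * ε ^ (-(r - 2 * α) / α)) := by
  have hK : 0 < √2 * c₁ / α := by positivity
  have hΛK : ∀ ε, Λ ε = 1 / α * log (√2 * c₁ / α / ε) := fun ε => by rw [hΛ, div_div]
  have hIoc : Ioo 0 (exp (-1)) ⊆ Ioc (0 : ℝ) 1 :=
    Ioo_subset_Ioc_self.trans (Ioc_subset_Ioc_right (exp_le_one_iff.mpr (by norm_num)))
  rcases lt_trichotomy r α with hlt | rfl | hgt
  · obtain ⟨C, hC, hB⟩ := discBias_le_of_ne (r := r) (c₁ := c₁) (c_disc := c_disc) hα hK Λ hΛK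
      (div_nonpos_of_nonpos_of_nonneg (by linarith) hα.le) le_rfl
      (div_nonpos_of_nonpos_of_nonneg (by linarith) hα.le) (by norm_num)
    refine ⟨2 * C, by positivity, fun ε hε M => ?_⟩
    rw [if_neg hlt.ne, if_pos hlt]
    have hM : 1 / (M : ℝ) ≤ 1 := by simpa using Nat.cast_inv_le_one M
    refine (hB ε (hIoc hε) M).trans ?_
    rw [neg_zero, rpow_zero]
    nlinarith [show 0 ≤ C * (1 / (M : ℝ)) by positivity]
  · obtain ⟨C, hC, hB⟩ := discBias_le_of_eq (c₁ := c₁) hα hK hcd.le Λ hΛK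
    refine ⟨C, hC, fun ε hε M => ?_⟩
    rw [if_pos rfl, if_neg (lt_irrefl r), if_pos rfl]
    exact hB ε hε M
  · rcases le_or_gt r (2 * α) with hle | hgt₂
    · obtain ⟨C, hC, hB⟩ := discBias_le_of_ne (r := r) (c₁ := c₁) (c_disc := c_disc) hα hK Λ hΛK
        (qF := 2) (qG := 0) (by rw [div_le_iff₀ hα]; linarith) zero_le_two
        (div_nonpos_of_nonpos_of_nonneg (by linarith) hα.le) (by norm_num)
      refine ⟨C, hC, fun ε hε M => ?_⟩
      rw [if_neg hgt.ne', if_neg hgt.not_gt, if_neg hgt.ne', if_pos hle]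
      simpa using hB ε (hIoc hε) M
    · obtain ⟨C, hC, hB⟩ := discBias_le_of_ne (r := r) (c₁ := c₁) (c_disc := c_disc) hα hK Λ hΛK
        le_rfl (by positivity) le_rfl (by linarith [div_pos (by linarith : 0 < r - 2 * α) hα])
      refine ⟨C, hC, fun ε hε M => ?_⟩
      rw [if_neg hgt.ne', if_neg hgt.not_gt, if_neg hgt.ne', if_neg hgt₂.not_ge]
      have hsplit : ε ^ (-(2 * (r - α) / α)) = ε ^ (-r / α) * ε ^ (-(r - 2 * α) / α) := by
        rw [← rpow_add hε.1]; congr 1; ring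
      convert hB ε (hIoc hε) M using 2
      rw [hsplit, ← neg_div]
      ring

/-- four-case bound on the discrepancy-induced squared-bias term `B₂`,
proof of Theorem 4.2. With the level `Λ(ε) := (1/α)·ln(√2·c₁/(α·ε))` and
`B₂(ε, M)` defined by the two cases `r = α` and `r ≠ α` of the paper, there exists a
constant `C > 0`, independent of `M` and `ε`, such that for all `ε ∈ (0, e⁻¹)` and all
`M ∈ ℕ`, `B₂(ε, M) ≤ C·(1/M)·E(ε, M)` with the four-case factor `E(ε, M)` of the paper. -/
theorem stmt_13 (α r c₁ c_disc : ℝ)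
    (hα : 0 < α) (hr : 0 < r) (hc₁ : 0 < c₁) (hcd : 0 < c_disc)
    (Λ : ℝ → ℝ) (hΛ : ∀ ε : ℝ, Λ ε = 1 / α * Real.log (Real.sqrt 2 * c₁ / (α * ε))) :
    ∃ C > (0 : ℝ), ∀ ε ∈ Ioo (0 : ℝ) (Real.exp (-1)), ∀ M : ℕ,
      (if r = α then
          c_disc ^ 2 / (M : ℝ) ^ 2 * c₁ ^ 2 * (Λ ε) ^ 2
            + c_disc / M * (2 * c₁ ^ 2 / α) * Λ ε * Real.exp (-α * Λ ε)
       else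
          c_disc ^ 2 / (M : ℝ) ^ 2 * c₁ ^ 2 * (1 / (r - α) ^ 2) *
              (Real.exp (2 * (r - α) * Λ ε) + 1)
            + c_disc / M * (2 * c₁ ^ 2 / α) * (1 / (r - α)) *
              (Real.exp ((r - 2 * α) * Λ ε) - Real.exp (-α * Λ ε)))
      ≤ C * (1 / (M : ℝ)) *
          (if r < α then 1
           else if r = α then (Real.log ε) ^ 2 / M + 1
           else if r ≤ 2 * α then ε ^ (-2 : ℝ) / M + 1
           else (ε ^ (-r / α) / M + 1) * ε ^ (-(r - 2 * α) / α)) :=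
  stmt_13_general α r c₁ c_disc hα hc₁ hcd Λ hΛ
end

section
/- Let r > 0, γ > 0, c₃ > 0, c_disc > 0, M ∈ ℕ and L_max > 0. Let φ : [0, L_max] → ℝ be a nonnegative measurable function with φ(ℓ) ≤ c₃·e^{γℓ} for all ℓ, and let L^(1),…,L^(M) be nonnegative reals satisfying sup_{ℓ > 0} |(1/M)∑_{k=1}^M 1_{ℓ ≤ L^(k)} − e^{−rℓ}| ≤ c_disc/M. Then the total cost ∑_{k=1}^M ∫_0^{L_max} 1_{[0,L^(k)]}(ℓ)·φ(ℓ) dℓ ≤ c₃·c_disc·(1/γ)·(e^{γ·L_max} − 1) + c₃·M·G(L_max), where G(L_max) := (e^{(γ−r)·L_max} − 1)/(γ−r) if r ≠ γ and G(L_max) := L_max if r = γ. -/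
open Set MeasureTheory

/-!
After exchanging sum and integral the integrand is `#{k | ℓ ≤ L k} · φ ℓ`. For `ℓ > 0` the
discrepancy bound gives `#{k | ℓ ≤ L k} ≤ M e^{-rℓ} + c_disc`, and `φ ℓ ≤ c₃ e^{γℓ}`; the
integral over `[0, L_max]` of the product of these two majorants is exactly the right-hand side.
-/

lemma integral_exp_mul (c b : ℝ) :
    ∫ x in (0 : ℝ)..b, Real.exp (c * x) = if c = 0 then b else (Real.exp (c * b) - 1) / c := by
  split_ifs with hc
  · simp [hc]
  · rw [intervalIntegral.integral_comp_mul_left (fun x => Real.exp x) hc, integral_exp]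
    simp [smul_eq_mul, div_eq_inv_mul]

lemma integral_mul_exp_add_const_mul_exp (r γ c₃ c M b : ℝ) (hγ : γ ≠ 0) :
    ∫ ℓ in (0 : ℝ)..b, (M * Real.exp (-r * ℓ) + c) * (c₃ * Real.exp (γ * ℓ))
      = c₃ * c * (1 / γ) * (Real.exp (γ * b) - 1)
        + c₃ * M * (if r = γ then b else (Real.exp ((γ - r) * b) - 1) / (γ - r)) := by
  have hsplit : ∀ ℓ : ℝ, (M * Real.exp (-r * ℓ) + c) * (c₃ * Real.exp (γ * ℓ))
      = c₃ * M * Real.exp ((γ - r) * ℓ) + c₃ * c * Real.exp (γ * ℓ) := by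
    intro ℓ
    rw [show (γ - r) * ℓ = -r * ℓ + γ * ℓ by ring, Real.exp_add]
    ring
  simp_rw [hsplit]
  rw [intervalIntegral.integral_add
    (Continuous.intervalIntegrable (by fun_prop) _ _)
    (Continuous.intervalIntegrable (by fun_prop) _ _),
    intervalIntegral.integral_const_mul, intervalIntegral.integral_const_mul,
    integral_exp_mul, integral_exp_mul, if_neg hγ]
  by_cases hrγ : r = γ
  · rw [if_pos (sub_eq_zero.2 hrγ.symm), if_pos hrγ]
    field_simp
    ring
  · rw [if_neg (sub_ne_zero.2 (Ne.symm hrγ)), if_neg hrγ]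
    field_simp
    ring

lemma IntervalIntegrable.of_nonneg_of_le {f g : ℝ → ℝ} {a b : ℝ} (hab : a ≤ b)
    (hg : IntervalIntegrable g volume a b) (hf : AEMeasurable f (volume.restrict (Icc a b)))
    (hf0 : ∀ x ∈ Icc a b, 0 ≤ f x) (hfg : ∀ x ∈ Icc a b, f x ≤ g x) :
    IntervalIntegrable f volume a b := by
  rw [intervalIntegrable_iff_integrableOn_Icc_of_le hab] at hg ⊢
  refine hg.mono' hf.aestronglyMeasurable ?_
  filter_upwards [ae_restrict_mem measurableSet_Icc] with x hx
  rw [Real.norm_of_nonneg (hf0 x hx)]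
  exact hfg x hx

lemma IntervalIntegrable.ite_le_mul {f : ℝ → ℝ} {a b : ℝ} (hf : IntervalIntegrable f volume a b)
    (c : ℝ) : IntervalIntegrable (fun x => (if x ≤ c then (1 : ℝ) else 0) * f x) volume a b := by
  have hm {μ : Measure ℝ} : AEStronglyMeasurable (fun x => if x ≤ c then (1 : ℝ) else 0) μ :=
    (measurable_const.ite measurableSet_Iic measurable_const).aestronglyMeasurable
  have hb : ∀ x, ‖if x ≤ c then (1 : ℝ) else 0‖ ≤ 1 := fun x => by split_ifs <;> simp
  exact ⟨hf.1.bdd_mul hm (.of_forall hb), hf.2.bdd_mul hm (.of_forall hb)⟩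

lemma le_mul_add_of_abs_div_mul_sub_le {M : ℕ} {S p c : ℝ} (hp : p ≠ 0)
    (h : |1 / (M : ℝ) * S - p| ≤ c / M) : S ≤ M * p + c := by
  -- for `M = 0` both divisions are the junk value `0`, so `h` would force `p = 0`
  have hM : (M : ℝ) ≠ 0 := by
    rintro hM
    simp [hM, hp] at h
  have h' := (abs_le.1 h).2
  rw [one_div_mul_eq_div, sub_le_iff_le_add, div_le_iff₀ (M.cast_nonneg.lt_of_ne' hM), add_mul,
    div_mul_cancel₀ _ hM] at h'
  linarith

theorem stmt_15_general (r γ c₃ c_disc : ℝ) (M : ℕ) (Lmax : ℝ)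
    (hγ : 0 < γ) (hLmax : 0 < Lmax)
    (φ : ℝ → ℝ) (hφ_meas : AEMeasurable φ (volume.restrict (Icc 0 Lmax)))
    (hφ0 : ∀ ℓ ∈ Icc (0 : ℝ) Lmax, 0 ≤ φ ℓ)
    (hφ : ∀ ℓ ∈ Icc (0 : ℝ) Lmax, φ ℓ ≤ c₃ * Real.exp (γ * ℓ))
    (L : Fin M → ℝ)
    (hdisc : ∀ ℓ > (0 : ℝ),
      |(1 / (M : ℝ)) * ∑ k, (if ℓ ≤ L k then (1 : ℝ) else 0) - Real.exp (-r * ℓ)|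
        ≤ c_disc / M) :
    ∑ k, ∫ ℓ in (0 : ℝ)..Lmax, (if ℓ ≤ L k then (1 : ℝ) else 0) * φ ℓ
      ≤ c₃ * c_disc * (1 / γ) * (Real.exp (γ * Lmax) - 1)
        + c₃ * M *
            (if r = γ then Lmax
             else (Real.exp ((γ - r) * Lmax) - 1) / (γ - r)) := by
  have hφ_int : IntervalIntegrable φ volume 0 Lmax :=
    .of_nonneg_of_le hLmax.le (Continuous.intervalIntegrable (by fun_prop) _ _) hφ_meas hφ0 hφ
  have hint k := hφ_int.ite_le_mul (L k)
  have hmajorant : ∀ ℓ ∈ Ioo 0 Lmax, ∑ k, (if ℓ ≤ L k then (1 : ℝ) else 0) * φ ℓ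
      ≤ (M * Real.exp (-r * ℓ) + c_disc) * (c₃ * Real.exp (γ * ℓ)) := by
    intro ℓ hℓ
    have hℓ' := Ioo_subset_Icc_self hℓ
    rw [← Finset.sum_mul]
    exact mul_le_mul_of_nonneg
      (le_mul_add_of_abs_div_mul_sub_le (Real.exp_pos _).ne' (hdisc ℓ hℓ.1)) (hφ ℓ hℓ')
      (Finset.sum_nonneg fun k _ => by positivity) ((hφ0 ℓ hℓ').trans (hφ ℓ hℓ'))
  calc ∑ k, ∫ ℓ in (0 : ℝ)..Lmax, (if ℓ ≤ L k then (1 : ℝ) else 0) * φ ℓ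
      = ∫ ℓ in (0 : ℝ)..Lmax, ∑ k, (if ℓ ≤ L k then (1 : ℝ) else 0) * φ ℓ :=
        (intervalIntegral.integral_finsetSum fun k _ => hint k).symm
    _ ≤ ∫ ℓ in (0 : ℝ)..Lmax, (M * Real.exp (-r * ℓ) + c_disc) * (c₃ * Real.exp (γ * ℓ)) :=
        intervalIntegral.integral_mono_on_of_le_Ioo hLmax.le
          ⟨integrable_finsetSum _ fun k _ => (hint k).1,
            integrable_finsetSum _ fun k _ => (hint k).2⟩
          (Continuous.intervalIntegrable (by fun_prop) _ _) hmajorant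
    _ = _ := integral_mul_exp_add_const_mul_exp r γ c₃ c_disc M Lmax hγ.ne'

/-- cost estimate in the proof of Theorem 4.2. If the nonnegative
measurable cost rate `φ` satisfies `φ(ℓ) ≤ c₃·e^(γℓ)` on `[0, L_max]` and the nonnegative
levels `L⁽¹⁾, …, L⁽ᴹ⁾` satisfy the exponential tail discrepancy bound `c_disc/M`, then the
total cost satisfies
`∑ₖ ∫_0^{L_max} 1_{[0,L⁽ᵏ⁾]}(ℓ)·φ(ℓ) dℓ
  ≤ c₃·c_disc·(1/γ)·(e^(γ·L_max) − 1) + c₃·M·G(L_max)`,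
where `G(L_max) = (e^((γ−r)·L_max) − 1)/(γ−r)` if `r ≠ γ` and `G(L_max) = L_max` if
`r = γ`. -/
theorem stmt_15 (r γ c₃ c_disc : ℝ) (M : ℕ) (Lmax : ℝ)
    (hr : 0 < r) (hγ : 0 < γ) (hc₃ : 0 < c₃) (hcd : 0 < c_disc) (hLmax : 0 < Lmax)
    (φ : ℝ → ℝ) (hφ_meas : AEMeasurable φ (volume.restrict (Icc 0 Lmax)))
    (hφ0 : ∀ ℓ ∈ Icc (0 : ℝ) Lmax, 0 ≤ φ ℓ)
    (hφ : ∀ ℓ ∈ Icc (0 : ℝ) Lmax, φ ℓ ≤ c₃ * Real.exp (γ * ℓ))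
    (L : Fin M → ℝ) (hL0 : ∀ k, 0 ≤ L k)
    (hdisc : ∀ ℓ > (0 : ℝ),
      |(1 / (M : ℝ)) * ∑ k, (if ℓ ≤ L k then (1 : ℝ) else 0) - Real.exp (-r * ℓ)|
        ≤ c_disc / M) :
    ∑ k, ∫ ℓ in (0 : ℝ)..Lmax, (if ℓ ≤ L k then (1 : ℝ) else 0) * φ ℓ
      ≤ c₃ * c_disc * (1 / γ) * (Real.exp (γ * Lmax) - 1)
        + c₃ * M *
            (if r = γ then Lmax
             else (Real.exp ((γ - r) * Lmax) - 1) / (γ - r)) :=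
  stmt_15_general r γ c₃ c_disc M Lmax hγ hLmax φ hφ_meas hφ0 hφ L hdisc
end
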